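/- arXiv:1108.3958 — 2 statements merged into one kernel-verified Lean document; each statement's English description precedes it below -/
import Mathlib

section
/- Let n ≥ 1. The number of functions f : Fin n → Fin n such that the submonoid of Function.End (Fin n) generated by f is synchronizing equals n^(n-1). Equivalently, the probability that a uniformly random endofunction of an n-element set generates a synchronizing monoid is 1/n. -/
open SimpleGraph

/-- A transformation monoid is *synchronizing* if it contains an element of rank 1,
i.e. whose range has exactly one element. -/
def IsSynchronizing {n : ℕ} (M : Submonoid (Function.End (Fin n))) : Prop :=
  ∃ f ∈ M, ∃ c : Fin n, Set.range f = {c}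

/-- The graph `Gr(M)` of a transformation monoid `M`: distinct vertices `v, w` are
adjacent iff no element of `M` identifies them. -/
def Gr {n : ℕ} (M : Submonoid (Function.End (Fin n))) : SimpleGraph (Fin n) where
  Adj v w := v ≠ w ∧ ∀ f ∈ M, f v ≠ f w
  symm := ⟨fun v w ⟨h1, h2⟩ => ⟨h1.symm, fun f hf => (h2 f hf).symm⟩⟩
  loopless := ⟨fun v ⟨h1, _⟩ => h1 rfl⟩

/-- The monoid of endomorphisms of a graph `X`, as a submonoid of `Function.End`. -/
def GraphEnd {n : ℕ} (X : SimpleGraph (Fin n)) : Submonoid (Function.End (Fin n)) where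
  carrier := {f | ∀ ⦃v w⦄, X.Adj v w → X.Adj (f v) (f w)}
  one_mem' := by intro v w h; exact h
  mul_mem' := by intro f g hf hg v w h; exact hf (hg h)

/-- The hull of a graph: `Hull(X) = Gr(End(X))`. -/
def Hull {n : ℕ} (X : SimpleGraph (Fin n)) : SimpleGraph (Fin n) := Gr (GraphEnd X)

/-- The derived graph `X'` of `X`: keep only the edges lying in a clique of
maximum size `ω(X)`. -/
def derivedGraph {n : ℕ} (X : SimpleGraph (Fin n)) : SimpleGraph (Fin n) where
  Adj v w := X.Adj v w ∧ ∃ s : Finset (Fin n), X.IsNClique X.cliqueNum s ∧ v ∈ s ∧ w ∈ s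
  symm := ⟨fun v w ⟨h, s, hs, hv, hw⟩ => ⟨h.symm, s, hs, hw, hv⟩⟩
  loopless := ⟨fun v ⟨h, _⟩ => h.ne rfl⟩


/-
`closure {f}` is synchronizing iff some iterate of `f` is constant, i.e. iff `f` has a
unique periodic point, i.e. its functional graph is a tree rooted at a fixed point. Such maps are
counted by Joyal's bijection. An arbitrary self-map is a permutation of its set `s` of periodic
points together with a forest rooted in `s`. A tree with a marked vertex `v` is the path from `v`
to the root, a linear order on its vertex set `s`, together with the forest rooted in `s` that
hangs off the path. As `s` has as many permutations as linear orders, this gives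
`n ^ n = n * #trees`.
-/

open Function Set

namespace Function

open Classical

section Basic

variable {α : Type*} {f g : α → α} {s : Set α}

theorem exists_iterate_mem_periodicPts [Finite α] (f : α → α) (x : α) :
    ∃ m, f^[m] x ∈ periodicPts f := by
  obtain ⟨i, j, hne, heq⟩ := Finite.exists_ne_map_eq_of_infinite (f^[·] x)
  wlog hij : i < j generalizing i j
  · exact this j i hne.symm heq.symm (hne.lt_or_gt.resolve_left hij)
  refine ⟨i, mk_mem_periodicPts (Nat.sub_pos_of_lt hij) ?_⟩
  rw [IsPeriodicPt, IsFixedPt, ← iterate_add_apply, Nat.sub_add_cancel hij.le]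
  exact heq.symm

/-- An orbit that enters `s` stays there, so a periodic point of `f` outside `s` has an orbit
avoiding `s`, along which `f` agrees with `g`. -/
theorem periodicPts_subset_of_mapsTo_of_eqOn_compl (hf : MapsTo f s s) (hfg : EqOn f g sᶜ)
    (hg : periodicPts g ⊆ s) : periodicPts f ⊆ s := by
  intro x hx
  obtain ⟨p, hp, hper⟩ := mem_periodicPts.mp hx
  by_cases hs : ∃ j, f^[j] x ∈ s
  · obtain ⟨j, hj⟩ := hs
    obtain ⟨q, rfl⟩ : ∃ q, p = q + 1 := ⟨p - 1, by omega⟩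
    rw [← (hper.mul_const j).eq, Nat.succ_mul, iterate_add_apply]
    exact hf.iterate _ hj
  · simp only [not_exists] at hs
    have hiter : ∀ k, f^[k] x = g^[k] x := by
      intro k
      induction k with
      | zero => rfl
      | succ k ih => rw [iterate_succ_apply', iterate_succ_apply', hfg (hs k), ih]
    exact hg (mk_mem_periodicPts hp (by rw [IsPeriodicPt, IsFixedPt, ← hiter]; exact hper))

theorem bijOn_of_periodicPts_eq (h : periodicPts f = s) : BijOn f s s :=
  h ▸ bijOn_periodicPts f

def HasUniquePeriodicPt (f : α → α) : Prop :=
  ∃ c, periodicPts f = {c}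

theorem apply_eq_of_periodicPts_eq_singleton {c : α} (h : periodicPts f = {c}) : f c = c :=
  (bijOn_of_periodicPts_eq h).mapsTo rfl

theorem hasUniquePeriodicPt_iff_exists_iterate_eq_const [Finite α] :
    HasUniquePeriodicPt f ↔ ∃ k c, ∀ x, f^[k] x = c := by
  constructor
  · rintro ⟨c, hc⟩
    have hreach : ∀ x, ∃ m, f^[m] x = c := fun x => by
      simpa [hc] using exists_iterate_mem_periodicPts f x
    choose m hm using hreach
    obtain ⟨K, hK⟩ := Finite.exists_le m
    refine ⟨K, c, fun x => ?_⟩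
    rw [← Nat.sub_add_cancel (hK x), iterate_add_apply, hm,
      iterate_fixed (apply_eq_of_periodicPts_eq_singleton hc)]
  · rintro ⟨k, c, hc⟩
    refine ⟨c, Subset.antisymm (fun x hx => ?_) ?_⟩
    · obtain ⟨y, -, rfl⟩ := ((bijOn_periodicPts f).iterate k).surjOn hx
      exact hc y
    · have hfix : f c = c := by
        conv_lhs => rw [← hc c]
        rw [← iterate_succ_apply' f k c, iterate_succ_apply, hc]
      rw [singleton_subset_iff]
      exact mk_mem_periodicPts one_pos hfix

end Basic

section Preperiod

variable {α : Type*} [Finite α] {f : α → α} {x : α} {m : ℕ} {s : Set α}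

noncomputable def preperiod (f : α → α) (x : α) : ℕ :=
  Nat.find (exists_iterate_mem_periodicPts f x)

theorem iterate_preperiod_mem_periodicPts : f^[preperiod f x] x ∈ periodicPts f :=
  Nat.find_spec (exists_iterate_mem_periodicPts f x)

theorem iterate_notMem_periodicPts_of_lt_preperiod (h : m < preperiod f x) :
    f^[m] x ∉ periodicPts f :=
  Nat.find_min (exists_iterate_mem_periodicPts f x) h

theorem preperiod_le_of_iterate_mem_periodicPts (h : f^[m] x ∈ periodicPts f) :
    preperiod f x ≤ m :=
  Nat.find_min' (exists_iterate_mem_periodicPts f x) h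

theorem iterate_preperiod_eq {c : α} (hc : periodicPts f = {c}) : f^[preperiod f x] x = c := by
  simpa [hc] using iterate_preperiod_mem_periodicPts (f := f) (x := x)

theorem injOn_iterate_Iic_preperiod : InjOn (f^[·] x) (Iic (preperiod f x)) := by
  intro i hi j hj hij
  by_contra hne
  wlog hlt : i < j generalizing i j
  · exact this hj hi hij.symm (Ne.symm hne) (by omega)
  refine iterate_notMem_periodicPts_of_lt_preperiod (lt_of_lt_of_le hlt hj)
    (mk_mem_periodicPts (Nat.sub_pos_of_lt hlt) ?_)
  rw [IsPeriodicPt, IsFixedPt, ← iterate_add_apply, Nat.sub_add_cancel hlt.le]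
  exact hij.symm

def pathToPeriodic (f : α → α) (x : α) : Set α :=
  (f^[·] x) '' Iic (preperiod f x)

theorem card_pathToPeriodic : Nat.card (pathToPeriodic f x) = preperiod f x + 1 := by
  rw [pathToPeriodic, Nat.card_image_of_injOn injOn_iterate_Iic_preperiod]
  simp

theorem iterate_mem_pathToPeriodic (h : m ≤ preperiod f x) : f^[m] x ∈ pathToPeriodic f x :=
  mem_image_of_mem _ h

theorem HasUniquePeriodicPt.mapsTo_pathToPeriodic (hf : HasUniquePeriodicPt f) (x : α) :
    MapsTo f (pathToPeriodic f x) (pathToPeriodic f x) := by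
  obtain ⟨c, hc⟩ := hf
  rintro _ ⟨i, hi, rfl⟩
  rcases (mem_Iic.mp hi).lt_or_eq with hlt | rfl
  · rw [← iterate_succ_apply' f]
    exact iterate_mem_pathToPeriodic hlt
  · dsimp only
    rw [iterate_preperiod_eq hc, apply_eq_of_periodicPts_eq_singleton hc,
      ← iterate_preperiod_eq (x := x) hc]
    exact iterate_mem_pathToPeriodic le_rfl

theorem HasUniquePeriodicPt.periodicPts_subset_pathToPeriodic (hf : HasUniquePeriodicPt f)
    (x : α) : periodicPts f ⊆ pathToPeriodic f x := by
  obtain ⟨c, hc⟩ := hf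
  rw [hc, singleton_subset_iff, ← iterate_preperiod_eq (x := x) hc]
  exact iterate_mem_pathToPeriodic le_rfl

noncomputable def pathToPeriodicEquiv {f : α → α} {x : α} (hs : pathToPeriodic f x = s) :
    Fin (Nat.card s) ≃ s :=
  have hcard : Nat.card s = preperiod f x + 1 := by rw [← hs, card_pathToPeriodic]
  Equiv.ofBijective
    (fun i => ⟨f^[i] x, by
      have hi : f^[i] x ∈ pathToPeriodic f x := iterate_mem_pathToPeriodic (by omega)
      rwa [hs] at hi⟩)
    ⟨fun i j hij => Fin.ext (injOn_iterate_Iic_preperiod (mem_Iic.mpr (by omega))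
        (mem_Iic.mpr (by omega)) (congrArg Subtype.val hij)),
      fun ⟨y, hy⟩ => by
        rw [← hs] at hy
        obtain ⟨i, hi, rfl⟩ := hy
        exact ⟨⟨i, by simp only [mem_Iic] at hi; omega⟩, rfl⟩⟩

@[simp]
theorem coe_pathToPeriodicEquiv_apply {f : α → α} {x : α} (hs : pathToPeriodic f x = s)
    (i : Fin (Nat.card s)) : (pathToPeriodicEquiv hs i : α) = f^[i] x :=
  rfl

end Preperiod

section Graft

variable {α : Type*} {s : Set α} {f h : α → α}

/-- The maps whose functional graph is a forest with root set `s`. -/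
def rootedForests (s : Set α) : Set (α → α) :=
  {h | EqOn h id s ∧ periodicPts h ⊆ s}

theorem nonempty_of_mem_rootedForests [Finite α] [Nonempty α] (hh : h ∈ rootedForests s) :
    s.Nonempty :=
  ⟨_, hh.2 (exists_iterate_mem_periodicPts h (Classical.arbitrary α)).choose_spec⟩

theorem piecewise_id_mem_rootedForests (hf : periodicPts f ⊆ s) :
    s.piecewise id f ∈ rootedForests s := by
  refine ⟨fun x hx => piecewise_eq_of_mem _ _ _ hx, ?_⟩
  refine periodicPts_subset_of_mapsTo_of_eqOn_compl (g := f)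
    (fun x hx => by simpa [piecewise_eq_of_mem _ _ _ hx]) ?_ hf
  exact fun x hx => piecewise_eq_of_notMem _ _ _ hx

noncomputable def graft (h : α → α) (ρ : s → s) : α → α :=
  fun x => if hx : x ∈ s then ρ ⟨x, hx⟩ else h x

variable {ρ : s → s}

@[simp]
theorem graft_coe (x : s) : graft h ρ x = ρ x := by
  simp [graft]

theorem graft_of_notMem {x : α} (hx : x ∉ s) : graft h ρ x = h x := by
  simp [graft, hx]

theorem mapsTo_graft : MapsTo (graft h ρ) s s :=
  fun x hx => (graft_coe (h := h) ⟨x, hx⟩).symm ▸ (ρ ⟨x, hx⟩).2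

theorem semiconj_coe_graft : Semiconj ((↑) : s → α) ρ (graft h ρ) :=
  fun x => (graft_coe x).symm

theorem iterate_graft_coe (k : ℕ) (x : s) : (graft h ρ)^[k] x = (ρ^[k] x : α) :=
  ((semiconj_coe_graft.iterate_right k) x).symm

theorem piecewise_id_graft (hh : EqOn h id s) : s.piecewise id (graft h ρ) = h := by
  funext x
  by_cases hx : x ∈ s
  · rw [piecewise_eq_of_mem _ _ _ hx, hh hx, id]
  · rw [piecewise_eq_of_notMem _ _ _ hx, graft_of_notMem hx]

theorem graft_piecewise_id_restrict (hf : MapsTo f s s) :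
    graft (s.piecewise id f) hf.restrict = f := by
  funext x
  by_cases hx : x ∈ s
  · exact graft_coe ⟨x, hx⟩
  · rw [graft_of_notMem hx, piecewise_eq_of_notMem _ _ _ hx]

theorem periodicPts_graft (hh : h ∈ rootedForests s) :
    periodicPts (graft h ρ) = (↑) '' periodicPts ρ := by
  refine Subset.antisymm (fun x hx => ?_) semiconj_coe_graft.mapsTo_periodicPts.image_subset
  have hxs : x ∈ s := periodicPts_subset_of_mapsTo_of_eqOn_compl mapsTo_graft
    (fun y hy => graft_of_notMem hy) hh.2 hx
  obtain ⟨p, hp, hper⟩ := mem_periodicPts.mp hx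
  refine ⟨⟨x, hxs⟩, mk_mem_periodicPts hp (Subtype.ext ?_), rfl⟩
  rw [← iterate_graft_coe]
  exact hper

noncomputable def periodicPtsFiberEquiv [Finite α] (s : Set α) :
    {f : α → α // periodicPts f = s} ≃ rootedForests s × Equiv.Perm s where
  toFun f := (⟨s.piecewise id f, piecewise_id_mem_rootedForests f.2.subset⟩,
    (bijOn_of_periodicPts_eq f.2).equiv f)
  invFun p := ⟨graft p.1 p.2, by
    rw [periodicPts_graft p.1.2, eq_univ_of_forall p.2.injective.mem_periodicPts,
      Subtype.coe_image_univ]⟩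
  left_inv f := Subtype.ext (graft_piecewise_id_restrict (bijOn_of_periodicPts_eq f.2).mapsTo)
  right_inv p :=
    Prod.ext (Subtype.ext (piecewise_id_graft p.1.2.1))
      (Equiv.ext fun x => Subtype.ext (graft_coe x))

end Graft

section ChainMap

variable {k : ℕ} {β : Type*}

def capSucc (i : Fin k) : Fin k :=
  ⟨min (i + 1) (k - 1), by omega⟩

theorem iterate_capSucc (m : ℕ) (i : Fin k) :
    capSucc^[m] i = ⟨min (i + m) (k - 1), by omega⟩ := by
  induction m with
  | zero => ext; simp; omega
  | succ m ih => rw [iterate_succ_apply', ih]; ext; simp [capSucc]; omega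

def chainMap (e : Fin k ≃ β) : β → β :=
  e ∘ capSucc ∘ e.symm

theorem iterate_chainMap (e : Fin k ≃ β) (m : ℕ) (i : Fin k) :
    (chainMap e)^[m] (e i) = e ⟨min (i + m) (k - 1), by omega⟩ := by
  have : Semiconj e capSucc (chainMap e) := fun j => by simp [chainMap]
  rw [← (this.iterate_right m) i, iterate_capSucc]

theorem periodicPts_chainMap (e : Fin k ≃ β) (hk : 0 < k) :
    periodicPts (chainMap e) = {e ⟨k - 1, by omega⟩} := by
  refine Subset.antisymm (fun y hy => ?_) (singleton_subset_iff.mpr ?_)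
  · obtain ⟨p, hp, hper⟩ := mem_periodicPts.mp hy
    obtain ⟨i, rfl⟩ := e.surjective y
    rw [mem_singleton_iff, ← (hper.mul_const k).eq, iterate_chainMap]
    have : k ≤ p * k := Nat.le_mul_of_pos_left k hp
    congr 2
    omega
  · refine mk_mem_periodicPts one_pos ?_
    rw [IsPeriodicPt, IsFixedPt, iterate_chainMap]
    congr 1
    ext
    simp

variable {α : Type*} {s : Set α} {h : α → α} (e : Fin k ≃ s)

theorem iterate_graft_chainMap (m : ℕ) (i : Fin k) :
    (graft h (chainMap e))^[m] (e i) = e ⟨min (i + m) (k - 1), by omega⟩ := by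
  rw [iterate_graft_coe, iterate_chainMap]

theorem periodicPts_graft_chainMap (hh : h ∈ rootedForests s) (hk : 0 < k) :
    periodicPts (graft h (chainMap e)) = {(e ⟨k - 1, by omega⟩ : α)} := by
  rw [periodicPts_graft hh, periodicPts_chainMap e hk, image_singleton]

variable [Finite α]

theorem preperiod_graft_chainMap (hh : h ∈ rootedForests s) (hk : 0 < k) :
    preperiod (graft h (chainMap e)) (e ⟨0, hk⟩) = k - 1 := by
  have hc := periodicPts_graft_chainMap e hh hk
  apply le_antisymm
  · apply preperiod_le_of_iterate_mem_periodicPts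
    rw [iterate_graft_chainMap, hc, mem_singleton_iff]
    simp
  · have hroot := iterate_preperiod_eq (x := (e ⟨0, hk⟩ : α)) hc
    rw [iterate_graft_chainMap] at hroot
    have := congrArg Fin.val (e.injective (Subtype.ext hroot))
    simp only at this
    omega

theorem pathToPeriodic_graft_chainMap (hh : h ∈ rootedForests s) (hk : 0 < k) :
    pathToPeriodic (graft h (chainMap e)) (e ⟨0, hk⟩) = s := by
  refine Subset.antisymm ?_ (fun y hy => ?_)
  · rintro _ ⟨m, -, rfl⟩
    dsimp only
    rw [iterate_graft_chainMap]
    exact Subtype.mem _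
  · obtain ⟨i, hi⟩ := e.surjective ⟨y, hy⟩
    obtain rfl : (e i : α) = y := by rw [hi]
    refine ⟨i, mem_Iic.mpr ?_, ?_⟩
    · rw [preperiod_graft_chainMap e hh hk]
      omega
    · dsimp only
      rw [iterate_graft_chainMap]
      congr 2
      ext
      simp only [zero_add]
      omega

theorem chainMap_pathToPeriodicEquiv {g : α → α} {v : α} (hg : HasUniquePeriodicPt g)
    (hs : pathToPeriodic g v = s) (hmaps : MapsTo g s s) :
    chainMap (pathToPeriodicEquiv hs) = hmaps.restrict := by
  obtain ⟨c, hc⟩ := hg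
  have hcard : Nat.card s = preperiod g v + 1 := by rw [← hs, card_pathToPeriodic]
  funext y
  obtain ⟨i, rfl⟩ := (pathToPeriodicEquiv hs).surjective y
  apply Subtype.ext
  simp only [chainMap, capSucc, comp_apply, Equiv.symm_apply_apply, MapsTo.val_restrict_apply,
    coe_pathToPeriodicEquiv_apply]
  rcases Nat.lt_or_ge (i + 1) (Nat.card s) with hi | hi
  · rw [min_eq_left (by omega), iterate_succ_apply']
  · have hi' : (i : ℕ) = preperiod g v := by omega
    rw [min_eq_right (by omega), show Nat.card s - 1 = preperiod g v by omega, hi',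
      iterate_preperiod_eq hc, apply_eq_of_periodicPts_eq_singleton hc]

end ChainMap

section Joyal

variable {α : Type*} [Finite α] [Nonempty α]

noncomputable def pathToPeriodicFiberEquiv (s : Set α) :
    {p : {g : α → α // HasUniquePeriodicPt g} × α // pathToPeriodic p.1.1 p.2 = s} ≃
      rootedForests s × (Fin (Nat.card s) ≃ s) where
  toFun p := (⟨s.piecewise id p.1.1, piecewise_id_mem_rootedForests
      ((p.1.1.2.periodicPts_subset_pathToPeriodic p.1.2).trans p.2.subset)⟩,
    pathToPeriodicEquiv p.2)
  invFun q :=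
    have : Nonempty s := (nonempty_of_mem_rootedForests q.1.2).to_subtype
    have hk : 0 < Nat.card s := Nat.card_pos
    ⟨(⟨graft q.1 (chainMap q.2), _, periodicPts_graft_chainMap q.2 q.1.2 hk⟩,
        q.2 ⟨0, hk⟩),
      pathToPeriodic_graft_chainMap q.2 q.1.2 hk⟩
  left_inv := by
    rintro ⟨⟨⟨g, hg⟩, v⟩, rfl⟩
    refine Subtype.ext (Prod.ext (Subtype.ext ?_) rfl)
    dsimp only
    rw [chainMap_pathToPeriodicEquiv hg rfl (hg.mapsTo_pathToPeriodic v),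
      graft_piecewise_id_restrict]
  right_inv := by
    rintro ⟨⟨h, hh⟩, e⟩
    refine Prod.ext (Subtype.ext (piecewise_id_graft hh.1)) (Equiv.ext fun i => Subtype.ext ?_)
    simp only [coe_pathToPeriodicEquiv_apply, iterate_graft_chainMap]
    congr 2
    ext
    simp only [zero_add]
    omega

noncomputable def endEquivHasUniquePeriodicPtProd :
    (α → α) ≃ {g : α → α // HasUniquePeriodicPt g} × α :=
  (Equiv.sigmaFiberEquiv periodicPts).symm.trans <|
    (Equiv.sigmaCongrRight fun s => (periodicPtsFiberEquiv s).trans <|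
      (Equiv.prodCongr (Equiv.refl _) (Equiv.equivCongr (Finite.equivFin s) (Equiv.refl s))).trans
        (pathToPeriodicFiberEquiv s).symm).trans
    (Equiv.sigmaFiberEquiv fun p : {g : α → α // HasUniquePeriodicPt g} × α =>
      pathToPeriodic p.1.1 p.2)

theorem card_hasUniquePeriodicPt :
    Nat.card {g : α → α // HasUniquePeriodicPt g} = Nat.card α ^ (Nat.card α - 1) := by
  have hpos : 0 < Nat.card α := Nat.card_pos
  apply Nat.eq_of_mul_eq_mul_right hpos
  rw [pow_sub_one_mul hpos.ne', ← Nat.card_prod, ← Nat.card_fun]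
  exact (Nat.card_congr endEquivHasUniquePeriodicPtProd).symm

end Joyal

end Function

theorem isSynchronizing_closure_singleton_iff {n : ℕ} (f : Function.End (Fin n)) :
    IsSynchronizing (Submonoid.closure {f}) ↔ HasUniquePeriodicPt f := by
  refine Iff.trans ?_ (hasUniquePeriodicPt_iff_exists_iterate_eq_const (f := f)).symm
  constructor
  · rintro ⟨_, hg, c, hc⟩
    obtain ⟨k, rfl⟩ := Submonoid.mem_closure_singleton.mp hg
    exact ⟨k, c, apply_eq_of_range_eq_singleton hc⟩
  · rintro ⟨k, c, hc⟩
    have : Nonempty (Fin n) := ⟨c⟩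
    exact ⟨f ^ k, Submonoid.mem_closure_singleton.mpr ⟨k, rfl⟩, c, range_eq_singleton hc⟩

theorem card_synchronizing_single_generators (n : ℕ) (hn : 1 ≤ n) :
    Nat.card {f : Function.End (Fin n) // IsSynchronizing (Submonoid.closure {f})}
        = n ^ (n - 1) ∧
    (Nat.card {f : Function.End (Fin n) // IsSynchronizing (Submonoid.closure {f})} : ℚ)
        / (n ^ n : ℚ) = 1 / n := by
  have : Nonempty (Fin n) := ⟨⟨0, hn⟩⟩
  have hcard : Nat.card {f : Function.End (Fin n) // IsSynchronizing (Submonoid.closure {f})}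
      = n ^ (n - 1) := by
    rw [Nat.card_congr (Equiv.subtypeEquivRight isSynchronizing_closure_singleton_iff)]
    have h := Function.card_hasUniquePeriodicPt (α := Fin n)
    rw [Nat.card_fin] at h
    exact h
  refine ⟨hcard, ?_⟩
  have hn0 : (n : ℚ) ≠ 0 := Nat.cast_ne_zero.mpr (by omega)
  rw [hcard, Nat.cast_pow, div_eq_div_iff (pow_ne_zero n hn0) hn0, one_mul, ← pow_succ,
    Nat.sub_add_cancel hn]
end

section
/- Let n ≥ 2 and let M be a maximal non-synchronizing submonoid of Function.End (Fin n), i.e., M is not synchronizing and every submonoid strictly containing M is synchronizing. Then there exist simple graphs X and Y on Fin n such that: (a) End(X) = End(Y) = M; (b) ω(X) = ω(Y) = χ(X) = χ(Y) (clique numbers and chromatic numbers all agree); (c) X = Hull(Y); and (d) Y = X' (Y is the derived graph of X). -/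
open SimpleGraph

/-!
Let `f ∈ M` have minimal rank `r`. No element of `M` identifies two points of the image of `f`
(that would lower the rank), so this image is an `r`-clique of `X = Gr M`, while `f` itself is a
proper `r`-colouring of `X`; hence `ω(X) = χ(X) = r`, and the same holds for `Y = X' ≤ X`, which
keeps that clique. Endomorphisms of `X` are injective on cliques, so they preserve maximum cliques
and hence `Y`; thus `M ≤ End(X) ≤ End(Y)`. A constant endomorphism would collapse the clique
`im f` of `X` (or `Y`), so neither monoid is synchronizing and maximality forces
`End(X) = End(Y) = M`; finally `Hull(Y) = Gr(M) = X`.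
-/

open Finset

namespace SimpleGraph

variable {V : Type*} {G : SimpleGraph V}

theorem cliqueNum_eq_of_isNClique_of_colorable [Finite V] {k : ℕ} {s : Finset V}
    (hs : G.IsNClique k s) (hc : G.Colorable k) : G.cliqueNum = k := by
  obtain ⟨t, ht⟩ := G.exists_isNClique_cliqueNum
  refine le_antisymm ?_ ?_
  · exact ht.card_eq ▸ ht.isClique.card_le_of_colorable hc
  · exact hs.card_eq ▸ IsClique.card_le_cliqueNum (tc := hs.isClique)

theorem chromaticNumber_eq_cliqueNum_of_colorable (hc : G.Colorable G.cliqueNum) :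
    G.chromaticNumber = G.cliqueNum :=
  le_antisymm hc.chromaticNumber_le G.cliqueNum_le_chromaticNumber

end SimpleGraph

variable {n : ℕ}

def rank (f : Function.End (Fin n)) : ℕ := #(univ.image f)

theorem exists_rank_minimal (M : Submonoid (Function.End (Fin n))) :
    ∃ f ∈ M, ∀ g ∈ M, rank f ≤ rank g :=
  Set.exists_min_image (M : Set (Function.End (Fin n))) rank
    (Set.toFinite (α := Fin n → Fin n) _) ⟨1, M.one_mem⟩

theorem rank_mul_lt_of_not_injOn {f g : Function.End (Fin n)}
    (hg : ¬ Set.InjOn g (univ.image f : Set (Fin n))) : rank (g * f) < rank f := by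
  have himage : univ.image (g * f) = (univ.image f).image g := image_image.symm
  rw [rank, rank, himage]
  exact lt_of_le_of_ne card_image_le (mt card_image_iff.mp hg)

theorem le_graphEnd_gr (M : Submonoid (Function.End (Fin n))) : M ≤ GraphEnd (Gr M) :=
  fun f hf _ _ hvw => ⟨hvw.2 f hf, fun g hg => hvw.2 (g * f) (M.mul_mem hg hf)⟩

section Gr

variable {M : Submonoid (Function.End (Fin n))} {f : Function.End (Fin n)}

theorem colorable_gr_of_mem (hf : f ∈ M) : (Gr M).Colorable (rank f) := by
  let C : (Gr M).Coloring (univ.image f) :=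
    Coloring.mk (fun v => ⟨f v, mem_image_of_mem f (mem_univ v)⟩)
      fun hvw h => hvw.2 f hf (congrArg Subtype.val h)
  simpa [rank] using C.colorable

theorem isNClique_gr_of_rank_minimal (hf : f ∈ M) (hmin : ∀ g ∈ M, rank f ≤ rank g) :
    (Gr M).IsNClique (rank f) (univ.image f) := by
  refine ⟨fun u hu w hw huw => ⟨huw, fun g hg hguw => ?_⟩, rfl⟩
  have hlt := rank_mul_lt_of_not_injOn (fun hinj => huw (hinj hu hw hguw))
  exact (hmin (g * f) (M.mul_mem hg hf)).not_gt hlt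

end Gr

theorem not_isSynchronizing_graphEnd {M : Submonoid (Function.End (Fin n))}
    (hM : ¬ IsSynchronizing M) {f : Function.End (Fin n)} (hf : f ∈ M)
    {Z : SimpleGraph (Fin n)} (hZ : Z.IsClique (univ.image f : Set (Fin n))) :
    ¬ IsSynchronizing (GraphEnd Z) := by
  rintro ⟨g, hg, c, hc⟩
  have hgc : ∀ v, g v = c := fun v => hc.subset (Set.mem_range_self v)
  refine hM ⟨f, hf, f c, Set.eq_singleton_iff_unique_mem.mpr ⟨Set.mem_range_self c, ?_⟩⟩
  have hmem : ∀ u, f u ∈ (univ.image f : Set (Fin n)) := fun u =>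
    mem_image_of_mem f (mem_univ u)
  rintro _ ⟨v, rfl⟩
  by_contra hne
  have hadj := hg (hZ (hmem v) (hmem c) hne)
  rw [hgc, hgc] at hadj
  exact hadj.ne rfl

theorem eq_of_le_of_not_isSynchronizing {M N : Submonoid (Function.End (Fin n))}
    (hmax : ∀ N : Submonoid (Function.End (Fin n)), M < N → IsSynchronizing N)
    (hle : M ≤ N) (hN : ¬ IsSynchronizing N) : N = M :=
  ((eq_or_lt_of_le hle).resolve_right fun hlt => hN (hmax N hlt)).symm

theorem derivedGraph_le (X : SimpleGraph (Fin n)) : derivedGraph X ≤ X := fun _ _ h => h.1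

theorem isNClique_derivedGraph {X : SimpleGraph (Fin n)} {s : Finset (Fin n)}
    (hs : X.IsNClique X.cliqueNum s) :
    (derivedGraph X).IsNClique X.cliqueNum s :=
  ⟨fun _ hu _ hw huw => ⟨hs.isClique hu hw huw, s, hs, hu, hw⟩, hs.card_eq⟩

theorem cliqueNum_derivedGraph (X : SimpleGraph (Fin n)) :
    (derivedGraph X).cliqueNum = X.cliqueNum := by
  obtain ⟨s, hs⟩ := X.exists_isNClique_cliqueNum
  obtain ⟨t, ht⟩ := (derivedGraph X).exists_isNClique_cliqueNum
  refine le_antisymm ?_ ?_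
  · exact ht.card_eq ▸ IsClique.card_le_cliqueNum (tc := ht.isClique.mono (derivedGraph_le X))
  · exact hs.card_eq ▸ IsClique.card_le_cliqueNum (tc := (isNClique_derivedGraph hs).isClique)

theorem SimpleGraph.IsNClique.image_of_mem_graphEnd {X : SimpleGraph (Fin n)} {k : ℕ}
    {s : Finset (Fin n)} {f : Function.End (Fin n)} (hf : f ∈ GraphEnd X)
    (hs : X.IsNClique k s) : X.IsNClique k (s.image f) := by
  have hinj : Set.InjOn f s := fun a ha b hb hab =>
    by_contra fun hne => (hf (hs.isClique ha hb hne)).ne hab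
  refine ⟨?_, by rw [card_image_of_injOn hinj, hs.card_eq]⟩
  intro x hx y hy hne
  obtain ⟨a, ha, rfl⟩ := mem_image.mp hx
  obtain ⟨b, hb, rfl⟩ := mem_image.mp hy
  exact hf (hs.isClique ha hb fun hab => hne (congrArg f hab))

theorem graphEnd_le_graphEnd_derivedGraph (X : SimpleGraph (Fin n)) :
    GraphEnd X ≤ GraphEnd (derivedGraph X) := by
  rintro f hf v w ⟨hvw, s, hs, hv, hw⟩
  exact ⟨hf hvw, s.image f, hs.image_of_mem_graphEnd hf, mem_image_of_mem f hv,
    mem_image_of_mem f hw⟩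

theorem maximal_non_synchronizing_structure_general (n : ℕ)
    (M : Submonoid (Function.End (Fin n)))
    (hM : ¬ IsSynchronizing M)
    (hmax : ∀ N : Submonoid (Function.End (Fin n)), M < N → IsSynchronizing N) :
    ∃ X Y : SimpleGraph (Fin n),
      GraphEnd X = M ∧ GraphEnd Y = M ∧
      X.cliqueNum = Y.cliqueNum ∧
      X.chromaticNumber = (X.cliqueNum : ℕ∞) ∧
      Y.chromaticNumber = (Y.cliqueNum : ℕ∞) ∧
      X = Hull Y ∧ Y = derivedGraph X := by
  obtain ⟨f, hf, hmin⟩ := exists_rank_minimal M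
  set X := Gr M
  set Y := derivedGraph X
  have hcliqueX : X.IsNClique (rank f) (univ.image f) := isNClique_gr_of_rank_minimal hf hmin
  have hωX : X.cliqueNum = rank f :=
    cliqueNum_eq_of_isNClique_of_colorable hcliqueX (colorable_gr_of_mem hf)
  have hcliqueY : Y.IsNClique (rank f) (univ.image f) :=
    hωX ▸ isNClique_derivedGraph (hωX ▸ hcliqueX)
  have hωY : Y.cliqueNum = X.cliqueNum := cliqueNum_derivedGraph X
  have hEndX : GraphEnd X = M := eq_of_le_of_not_isSynchronizing hmax (le_graphEnd_gr M)
    (not_isSynchronizing_graphEnd hM hf hcliqueX.isClique)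
  have hEndY : GraphEnd Y = M := eq_of_le_of_not_isSynchronizing hmax
    ((le_graphEnd_gr M).trans (graphEnd_le_graphEnd_derivedGraph X))
    (not_isSynchronizing_graphEnd hM hf hcliqueY.isClique)
  have hcolX : X.Colorable X.cliqueNum := hωX ▸ colorable_gr_of_mem hf
  have hcolY : Y.Colorable Y.cliqueNum := hωY ▸ hcolX.mono_left (derivedGraph_le X)
  refine ⟨X, Y, hEndX, hEndY, hωY.symm, chromaticNumber_eq_cliqueNum_of_colorable hcolX,
    chromaticNumber_eq_cliqueNum_of_colorable hcolY, ?_, rfl⟩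
  change Gr M = Gr (GraphEnd Y)
  rw [hEndY]

theorem maximal_non_synchronizing_structure (n : ℕ) (hn : 2 ≤ n)
    (M : Submonoid (Function.End (Fin n)))
    (hM : ¬ IsSynchronizing M)
    (hmax : ∀ N : Submonoid (Function.End (Fin n)), M < N → IsSynchronizing N) :
    ∃ X Y : SimpleGraph (Fin n),
      GraphEnd X = M ∧ GraphEnd Y = M ∧
      X.cliqueNum = Y.cliqueNum ∧
      X.chromaticNumber = (X.cliqueNum : ℕ∞) ∧
      Y.chromaticNumber = (Y.cliqueNum : ℕ∞) ∧
      X = Hull Y ∧ Y = derivedGraph X :=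
  maximal_non_synchronizing_structure_general n M hM hmax
end
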